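/- Let n ≥ 1, let P be a probability measure, and let E₁, H₁, …, Eₙ, Hₙ be measurable events with P(Hᵢ) > 0 for all i; set pᵢ = P(Eᵢ|Hᵢ). Then l ≤ P(⋃ᵢ(Eᵢ∩Hᵢ) | ⋃ᵢ Hᵢ) ≤ min(p₁ + ⋯ + pₙ, 1), where l = 0 if pᵢ = 0 for at least one i, and l = 1/(1 + Σᵢ (1−pᵢ)/pᵢ) if pᵢ > 0 for all i. -/

import Mathlib

/-!
Write `A = P(⋃ᵢ Eᵢ ∩ Hᵢ)`, `B = P(⋃ᵢ Hᵢ)` and `P(Eᵢ ∩ Hᵢ) = pᵢ P(Hᵢ)`. The upper bound is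
subadditivity: `A ≤ ∑ᵢ pᵢ P(Hᵢ) ≤ (∑ᵢ pᵢ) B`. For the lower bound, `⋃ᵢ Hᵢ` is covered by
`⋃ᵢ Eᵢ ∩ Hᵢ` together with the sets `Hᵢ \ Eᵢ`, and
`P(Hᵢ \ Eᵢ) = P(Eᵢ ∩ Hᵢ) (1 - pᵢ) / pᵢ ≤ A (1 - pᵢ) / pᵢ`, so `B ≤ A (1 + ∑ᵢ (1 - pᵢ) / pᵢ)`.
-/

open MeasureTheory Set
open scoped Classical

/-- Conditional probability `P(E|H) = P(E ∩ H)/P(H)` as a real number. -/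
noncomputable def condP {Ω : Type*} [MeasurableSpace Ω] (μ : Measure Ω) (E H : Set Ω) : ℝ :=
  (μ (E ∩ H)).toReal / (μ H).toReal

open Finset

noncomputable def hamacherProduct {ι : Type*} [Fintype ι] (p : ι → ℝ) : ℝ :=
  if ∃ i, p i = 0 then 0 else 1 / (1 + ∑ i, (1 - p i) / p i)

noncomputable def lukasiewiczTConorm {ι : Type*} [Fintype ι] (p : ι → ℝ) : ℝ :=
  min (∑ i, p i) 1

section CondP

variable {Ω : Type*} [MeasurableSpace Ω] {μ : Measure Ω} {E H : Set Ω}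

theorem condP_def : condP μ E H = μ.real (E ∩ H) / μ.real H := rfl

theorem condP_nonneg : 0 ≤ condP μ E H :=
  div_nonneg measureReal_nonneg measureReal_nonneg

theorem condP_le_one [IsFiniteMeasure μ] : condP μ E H ≤ 1 :=
  div_le_one_of_le₀ (measureReal_mono inter_subset_right) measureReal_nonneg

theorem measureReal_pos_of_condP_pos (hp : 0 < condP μ E H) : 0 < μ.real H := by
  refine measureReal_nonneg.lt_of_ne fun h => ?_
  rw [condP_def, ← h, div_zero] at hp
  exact hp.false

theorem measureReal_inter_eq_condP_mul [IsFiniteMeasure μ] :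
    μ.real (E ∩ H) = condP μ E H * μ.real H := by
  rcases (measureReal_nonneg (μ := μ) (s := H)).eq_or_lt' with hH | hH
  · rw [hH, mul_zero]
    exact le_antisymm (hH ▸ measureReal_mono inter_subset_right) measureReal_nonneg
  · rw [condP_def, div_mul_cancel₀ _ hH.ne']

theorem measureReal_sdiff_eq_mul_one_sub_div_condP [IsFiniteMeasure μ] (hE : MeasurableSet E)
    (hp : 0 < condP μ E H) :
    μ.real (H \ E) = μ.real (E ∩ H) * ((1 - condP μ E H) / condP μ E H) := by
  have hsplit := measureReal_inter_add_sdiff (μ := μ) (s := H) hE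
  rw [inter_comm, measureReal_inter_eq_condP_mul] at hsplit
  rw [measureReal_inter_eq_condP_mul]
  field_simp
  linarith

end CondP

section QuasiDisjunction

variable {Ω ι : Type*} [MeasurableSpace Ω] {μ : Measure Ω} {E H : ι → Set Ω}

theorem condP_iUnion_inter_iUnion :
    condP μ (⋃ i, E i ∩ H i) (⋃ i, H i) = μ.real (⋃ i, E i ∩ H i) / μ.real (⋃ i, H i) := by
  rw [condP_def, inter_eq_left.mpr (iUnion_mono fun i => inter_subset_right)]

variable [IsFiniteMeasure μ] [Fintype ι]

theorem measureReal_iUnion_le_add_sum_sdiff :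
    μ.real (⋃ i, H i) ≤ μ.real (⋃ i, E i ∩ H i) + ∑ i, μ.real (H i \ E i) := by
  have hcover : ⋃ i, H i ⊆ (⋃ i, E i ∩ H i) ∪ ⋃ i, H i \ E i := by
    refine iUnion_subset fun i x hx => ?_
    by_cases hxE : x ∈ E i
    · exact Or.inl (mem_iUnion.mpr ⟨i, hxE, hx⟩)
    · exact Or.inr (mem_iUnion.mpr ⟨i, hx, hxE⟩)
  calc μ.real (⋃ i, H i) ≤ μ.real ((⋃ i, E i ∩ H i) ∪ ⋃ i, H i \ E i) := measureReal_mono hcover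
    _ ≤ μ.real (⋃ i, E i ∩ H i) + ∑ i, μ.real (H i \ E i) :=
      (measureReal_union_le _ _).trans (add_le_add_right (measureReal_iUnion_fintype_le _) _)

theorem condP_iUnion_inter_iUnion_le_sum :
    condP μ (⋃ i, E i ∩ H i) (⋃ i, H i) ≤ ∑ i, condP μ (E i) (H i) := by
  rw [condP_iUnion_inter_iUnion]
  rcases (measureReal_nonneg (μ := μ) (s := ⋃ i, H i)).eq_or_lt' with hB | hB
  · rw [hB, div_zero]
    exact sum_nonneg fun i _ => condP_nonneg
  rw [div_le_iff₀ hB]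
  calc μ.real (⋃ i, E i ∩ H i) ≤ ∑ i, μ.real (E i ∩ H i) := measureReal_iUnion_fintype_le _
    _ = ∑ i, condP μ (E i) (H i) * μ.real (H i) :=
      sum_congr rfl fun i _ => measureReal_inter_eq_condP_mul
    _ ≤ ∑ i, condP μ (E i) (H i) * μ.real (⋃ i, H i) := sum_le_sum fun i _ =>
      mul_le_mul_of_nonneg_left (measureReal_mono (subset_iUnion H i)) condP_nonneg
    _ = (∑ i, condP μ (E i) (H i)) * μ.real (⋃ i, H i) := (sum_mul ..).symm

theorem condP_iUnion_inter_iUnion_le_lukasiewiczTConorm :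
    condP μ (⋃ i, E i ∩ H i) (⋃ i, H i) ≤ lukasiewiczTConorm fun i => condP μ (E i) (H i) :=
  le_min condP_iUnion_inter_iUnion_le_sum condP_le_one

theorem one_div_one_add_sum_le_condP_iUnion_inter_iUnion [Nonempty ι]
    (hE : ∀ i, MeasurableSet (E i)) (hp : ∀ i, 0 < condP μ (E i) (H i)) :
    1 / (1 + ∑ i, (1 - condP μ (E i) (H i)) / condP μ (E i) (H i)) ≤
      condP μ (⋃ i, E i ∩ H i) (⋃ i, H i) := by
  set A := μ.real (⋃ i, E i ∩ H i)
  set S := ∑ i, (1 - condP μ (E i) (H i)) / condP μ (E i) (H i)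
  have hodds : ∀ i, 0 ≤ (1 - condP μ (E i) (H i)) / condP μ (E i) (H i) := fun i =>
    div_nonneg (sub_nonneg.mpr condP_le_one) (hp i).le
  have hS : 0 ≤ S := sum_nonneg fun i _ => hodds i
  obtain ⟨i₀⟩ := ‹Nonempty ι›
  have hB : 0 < μ.real (⋃ i, H i) :=
    (measureReal_pos_of_condP_pos (hp i₀)).trans_le (measureReal_mono (subset_iUnion H i₀))
  have hcover : μ.real (⋃ i, H i) ≤ A * (1 + S) :=
    calc μ.real (⋃ i, H i) ≤ A + ∑ i, μ.real (H i \ E i) := measureReal_iUnion_le_add_sum_sdiff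
      _ = A + ∑ i, μ.real (E i ∩ H i) * ((1 - condP μ (E i) (H i)) / condP μ (E i) (H i)) := by
        simp_rw [measureReal_sdiff_eq_mul_one_sub_div_condP (hE _) (hp _)]
      _ ≤ A + ∑ i, A * ((1 - condP μ (E i) (H i)) / condP μ (E i) (H i)) := by
        gcongr with i
        · exact hodds i
        · exact measureReal_mono (subset_iUnion (fun i => E i ∩ H i) i)
      _ = A * (1 + S) := by rw [← mul_sum, mul_add, mul_one]
  rw [condP_iUnion_inter_iUnion, div_le_div_iff₀ (by linarith [hS]) hB]
  linarith

theorem hamacherProduct_le_condP_iUnion_inter_iUnion [Nonempty ι]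
    (hE : ∀ i, MeasurableSet (E i)) :
    hamacherProduct (fun i => condP μ (E i) (H i)) ≤ condP μ (⋃ i, E i ∩ H i) (⋃ i, H i) := by
  unfold hamacherProduct
  split_ifs with hzero
  · exact condP_nonneg
  · push Not at hzero
    exact one_div_one_add_sum_le_condP_iUnion_inter_iUnion hE
      fun i => condP_nonneg.lt_of_ne' (hzero i)

end QuasiDisjunction

theorem quasi_disjunction_bounds_n_general {Ω : Type*} [MeasurableSpace Ω]
    (μ : Measure Ω) [IsProbabilityMeasure μ] (n : ℕ) (hn : 1 ≤ n)
    (E H : Fin n → Set Ω)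
    (hE : ∀ i, MeasurableSet (E i))
    (p : Fin n → ℝ) (hp : ∀ i, p i = condP μ (E i) (H i)) :
    (if ∃ i, p i = 0 then 0 else 1 / (1 + ∑ i, (1 - p i) / p i)) ≤
        condP μ (⋃ i, (E i ∩ H i)) (⋃ i, H i) ∧
      condP μ (⋃ i, (E i ∩ H i)) (⋃ i, H i) ≤ min (∑ i, p i) 1 := by
  obtain rfl : p = fun i => condP μ (E i) (H i) := funext hp
  have : Nonempty (Fin n) := ⟨⟨0, hn⟩⟩
  refine ⟨?_, condP_iUnion_inter_iUnion_le_lukasiewiczTConorm⟩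
  -- the two `if`s are decided by different `Decidable` instances (`Nat.decidableExistsFin` here)
  convert hamacherProduct_le_condP_iUnion_inter_iUnion (μ := μ) (H := H) hE using 1
  unfold hamacherProduct
  congr

theorem quasi_disjunction_bounds_n {Ω : Type*} [MeasurableSpace Ω]
    (μ : Measure Ω) [IsProbabilityMeasure μ] (n : ℕ) (hn : 1 ≤ n)
    (E H : Fin n → Set Ω)
    (hE : ∀ i, MeasurableSet (E i)) (hH : ∀ i, MeasurableSet (H i))
    (hpos : ∀ i, 0 < μ (H i))
    (p : Fin n → ℝ) (hp : ∀ i, p i = condP μ (E i) (H i)) :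
    (if ∃ i, p i = 0 then 0 else 1 / (1 + ∑ i, (1 - p i) / p i)) ≤
        condP μ (⋃ i, (E i ∩ H i)) (⋃ i, H i) ∧
      condP μ (⋃ i, (E i ∩ H i)) (⋃ i, H i) ≤ min (∑ i, p i) 1 :=
  quasi_disjunction_bounds_n_general μ n hn E H hE p hp
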